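/- arXiv:math/0409073 — 6 statements merged into one kernel-verified Lean document; each statement's English description precedes it below -/
import Mathlib

section
/- Let k' = [[−1, 0], [0, 1]] ∈ M₂(ℝ). Then: (i) for every X ∈ M₂(ℝ) with tr X = 0 and det X = −1 there exists g ∈ SL₂(ℝ) with g·k'·g⁻¹ = X; (ii) the stabilizer {g ∈ SL₂(ℝ) : g·k'·g⁻¹ = k'} equals {a·I + b·k' : a, b ∈ ℝ, a² − b² = 1}. Hence the adjoint action of SL₂(ℝ) on the pseudosphere S₁² is transitive with isotropy group SO₁(2), giving the Hopf fibering of S₁². -/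
lemma conj_eq_iff (g K X : Matrix (Fin 2) (Fin 2) ℝ) (hg : g.det = 1) :
    g * K * g⁻¹ = X ↔ g * K = X * g := by
  haveI : Invertible g := g.invertibleOfIsUnitDet (by simp [hg])
  exact Matrix.mul_inv_eq_iff_eq_mul_of_invertible _ _ _

/-- With `k' = [[−1,0],[0,1]]`:
(i) every trace-free `X ∈ M₂(ℝ)` with `det X = −1` is of the form `g·k'·g⁻¹`
    for some `g ∈ SL₂(ℝ)` (transitivity of the adjoint action on the
    pseudosphere `S₁²`);
(ii) the isotropy subgroup of `k'` in `SL₂(ℝ)` is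
     `SO₁(2) = {a·I + b·k' : a² − b² = 1}`.
This gives the Hopf fibering of `S₁²`. -/
theorem statement5 :
    (∀ X : Matrix (Fin 2) (Fin 2) ℝ, X.trace = 0 → X.det = -1 →
      ∃ g : Matrix (Fin 2) (Fin 2) ℝ, g.det = 1 ∧
        g * !![(-1 : ℝ), 0; 0, 1] * g⁻¹ = X) ∧
    ({g : Matrix (Fin 2) (Fin 2) ℝ |
        g.det = 1 ∧ g * !![(-1 : ℝ), 0; 0, 1] * g⁻¹ = !![(-1 : ℝ), 0; 0, 1]} =
      {g : Matrix (Fin 2) (Fin 2) ℝ | ∃ a b : ℝ, a ^ 2 - b ^ 2 = 1 ∧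
        g = a • (1 : Matrix (Fin 2) (Fin 2) ℝ) + b • !![(-1 : ℝ), 0; 0, 1]}) := by
  constructor
  · intro X htr hdet
    obtain ⟨x, y, z, w, rfl⟩ : ∃ x y z w : ℝ, X = !![x, y; z, w] :=
      ⟨_, _, _, _, by ext i j; fin_cases i <;> fin_cases j <;> rfl⟩
    have h11 : w = -x := by
      rw [Matrix.trace_fin_two_of] at htr; linarith
    subst h11
    have hd : x * x + y * z = 1 := by
      rw [Matrix.det_fin_two_of] at hdet; nlinarith
    have hX : !![x, y; z, -x] = !![x, y; z, -x] := rfl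
    by_cases hy0 : y = 0
    · have hx2 : x = 1 ∨ x = -1 := by
        have h0 : (x - 1) * (x + 1) = 0 := by rw [hy0] at hd; nlinarith
        rcases mul_eq_zero.mp h0 with h | h
        · left; linarith
        · right; linarith
      rcases hx2 with h1 | h1
      · refine ⟨!![0, 2; -(1:ℝ)/2, z], ?_, ?_⟩
        · rw [Matrix.det_fin_two_of]; ring
        · rw [conj_eq_iff _ _ _ (by rw [Matrix.det_fin_two_of]; ring), hX, hy0, h1]
          ext i j
          fin_cases i <;> fin_cases j <;>
            simp [Matrix.mul_apply, Fin.sum_univ_two] <;> ring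
      · refine ⟨!![1, 0; -z/2, 1], ?_, ?_⟩
        · rw [Matrix.det_fin_two_of]; ring
        · rw [conj_eq_iff _ _ _ (by rw [Matrix.det_fin_two_of]; ring), hX, hy0, h1]
          ext i j
          fin_cases i <;> fin_cases j <;>
            simp [Matrix.mul_apply, Fin.sum_univ_two] <;> ring
    · have hdg : (!![y, (1:ℝ)/2; -(x+1), (1-x)/(2*y)]).det = 1 := by
        rw [Matrix.det_fin_two_of]; field_simp; ring
      refine ⟨!![y, (1:ℝ)/2; -(x+1), (1-x)/(2*y)], hdg, ?_⟩
      rw [conj_eq_iff _ _ _ hdg, hX]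
      ext i j
      fin_cases i <;> fin_cases j <;>
        simp [Matrix.mul_apply, Fin.sum_univ_two] <;> (try field_simp) <;>
        first
          | ring1
          | linear_combination (4*y) * hd
          | linear_combination (-4*y) * hd
          | linear_combination (2*y) * hd
          | linear_combination (-2*y) * hd
          | linear_combination hd
          | linear_combination -hd
          | linear_combination (2*y*y) * hd
          | linear_combination (-2*y*y) * hd
  · ext g
    simp only [Set.mem_setOf_eq]
    constructor
    · rintro ⟨hdet, hconj⟩
      rw [conj_eq_iff _ _ _ hdet] at hconj
      have h01 : g 0 1 = 0 := by
        have := congrFun (congrFun hconj 0) 1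
        simp [Matrix.mul_apply, Fin.sum_univ_two] at this
        linarith
      have h10 : g 1 0 = 0 := by
        have := congrFun (congrFun hconj 1) 0
        simp [Matrix.mul_apply, Fin.sum_univ_two] at this
        linarith
      refine ⟨(g 0 0 + g 1 1) / 2, (g 1 1 - g 0 0) / 2, ?_, ?_⟩
      · rw [Matrix.det_fin_two, h01, h10] at hdet
        nlinarith [hdet]
      · ext i j
        fin_cases i <;> fin_cases j <;>
          simp [Matrix.one_apply, h01, h10] <;> ring
    · rintro ⟨a, b, hab, rfl⟩
      have hd : (a • (1 : Matrix (Fin 2) (Fin 2) ℝ) + b • !![(-1 : ℝ), 0; 0, 1]).det = 1 := by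
        have : (a • (1 : Matrix (Fin 2) (Fin 2) ℝ) + b • !![(-1 : ℝ), 0; 0, 1]) =
            !![a - b, 0; 0, a + b] := by
          ext i j
          fin_cases i <;> fin_cases j <;> simp [Matrix.one_apply] <;> ring
        rw [this, Matrix.det_fin_two_of]
        nlinarith [hab]
      refine ⟨hd, ?_⟩
      rw [conj_eq_iff _ _ _ hd]
      ext i j
      fin_cases i <;> fin_cases j <;>
        simp [Matrix.mul_apply, Fin.sum_univ_two, Matrix.one_apply] <;> ring
end

section
/- Let D ⊆ ℝ² be open and let ω, Q, R, H, u₀, v₀ : D → ℝ be smooth. Define the M₂(ℝ)-valued functions U = u₀·I + [[−ω_u/4, −Q e^{−ω/2}], [ (H/2) e^{ω/2}, ω_u/4 ]] and V = v₀·I + [[ ω_v/4, −(H/2) e^{ω/2} ], [ R e^{−ω/2}, −ω_v/4 ]]. Then the zero-curvature (compatibility) equation ∂U/∂v − ∂V/∂u = UV − VU holds on D if and only if ∂u₀/∂v = ∂v₀/∂u and the Gauss–Codazzi equations hold on D: ω_{uv} + ½ H² e^{ω} − 2QR e^{−ω} = 0, H_u = 2 e^{−ω} Q_v, and H_v = 2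 e^{−ω} R_u. -/
/-- Partial derivative in the first (null) variable `u`. -/
noncomputable def pd₁ (f : ℝ × ℝ → ℝ) (p : ℝ × ℝ) : ℝ :=
  deriv (fun u => f (u, p.2)) p.1

/-- Partial derivative in the second (null) variable `v`. -/
noncomputable def pd₂ (f : ℝ × ℝ → ℝ) (p : ℝ × ℝ) : ℝ :=
  deriv (fun v => f (p.1, v)) p.2

/-- The Lax matrix `U = u₀·I + [[−ω_u/4, −Q e^{−ω/2}], [(H/2)e^{ω/2}, ω_u/4]]`. -/
noncomputable def Umat (ω Q H u₀ : ℝ × ℝ → ℝ) (p : ℝ × ℝ) :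
    Matrix (Fin 2) (Fin 2) ℝ :=
  u₀ p • (1 : Matrix (Fin 2) (Fin 2) ℝ) +
    !![-(pd₁ ω p) / 4, -(Q p) * Real.exp (-(ω p) / 2);
       (H p) / 2 * Real.exp ((ω p) / 2), (pd₁ ω p) / 4]

/-- The Lax matrix `V = v₀·I + [[ω_v/4, −(H/2)e^{ω/2}], [R e^{−ω/2}, −ω_v/4]]`. -/
noncomputable def Vmat (ω R H v₀ : ℝ × ℝ → ℝ) (p : ℝ × ℝ) :
    Matrix (Fin 2) (Fin 2) ℝ :=
  v₀ p • (1 : Matrix (Fin 2) (Fin 2) ℝ) +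
    !![(pd₂ ω p) / 4, -(H p) / 2 * Real.exp ((ω p) / 2);
       (R p) * Real.exp (-(ω p) / 2), -(pd₂ ω p) / 4]


lemma hasDerivAt_pd₁ {f : ℝ × ℝ → ℝ} {p : ℝ × ℝ} (hf : DifferentiableAt ℝ f p) :
    HasDerivAt (fun u => f (u, p.2)) (pd₁ f p) p.1 := by
  have h : DifferentiableAt ℝ (fun u : ℝ => f (u, p.2)) p.1 :=
    hf.comp p.1 (differentiableAt_id.prodMk (differentiableAt_const _))
  exact h.hasDerivAt

lemma hasDerivAt_pd₂ {f : ℝ × ℝ → ℝ} {p : ℝ × ℝ} (hf : DifferentiableAt ℝ f p) :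
    HasDerivAt (fun v => f (p.1, v)) (pd₂ f p) p.2 := by
  have h : DifferentiableAt ℝ (fun v : ℝ => f (p.1, v)) p.2 :=
    hf.comp p.2 ((differentiableAt_const _).prodMk differentiableAt_id)
  exact h.hasDerivAt

lemma pd₁_eq_fderiv {f : ℝ × ℝ → ℝ} {p : ℝ × ℝ} (hf : DifferentiableAt ℝ f p) :
    pd₁ f p = fderiv ℝ f p (1, 0) :=
  (hf.hasFDerivAt.comp_hasDerivAt p.1
    ((hasDerivAt_id p.1).prodMk (hasDerivAt_const _ _))).deriv

lemma pd₂_eq_fderiv {f : ℝ × ℝ → ℝ} {p : ℝ × ℝ} (hf : DifferentiableAt ℝ f p) :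
    pd₂ f p = fderiv ℝ f p (0, 1) :=
  (hf.hasFDerivAt.comp_hasDerivAt p.2
    ((hasDerivAt_const _ _).prodMk (hasDerivAt_id p.2))).deriv

lemma contDiffOn_pd₁ {D : Set (ℝ × ℝ)} (hD : IsOpen D) {f : ℝ × ℝ → ℝ}
    (hf : ContDiffOn ℝ (⊤ : ℕ∞) f D) : ContDiffOn ℝ (⊤ : ℕ∞) (pd₁ f) D := by
  have h : ContDiffOn ℝ (⊤ : ℕ∞) (fderiv ℝ f) D := hf.fderiv_of_isOpen hD (by simp)
  have h2 : ContDiffOn ℝ (⊤ : ℕ∞) (fun q => fderiv ℝ f q ((1 : ℝ), (0 : ℝ))) D :=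
    (ContinuousLinearMap.apply ℝ ℝ ((1 : ℝ), (0 : ℝ))).contDiff.comp_contDiffOn h
  exact h2.congr fun q hq => pd₁_eq_fderiv
    ((hf.differentiableOn (by simp)).differentiableAt (hD.mem_nhds hq))

lemma contDiffOn_pd₂ {D : Set (ℝ × ℝ)} (hD : IsOpen D) {f : ℝ × ℝ → ℝ}
    (hf : ContDiffOn ℝ (⊤ : ℕ∞) f D) : ContDiffOn ℝ (⊤ : ℕ∞) (pd₂ f) D := by
  have h : ContDiffOn ℝ (⊤ : ℕ∞) (fderiv ℝ f) D := hf.fderiv_of_isOpen hD (by simp)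
  have h2 : ContDiffOn ℝ (⊤ : ℕ∞) (fun q => fderiv ℝ f q ((0 : ℝ), (1 : ℝ))) D :=
    (ContinuousLinearMap.apply ℝ ℝ ((0 : ℝ), (1 : ℝ))).contDiff.comp_contDiffOn h
  exact h2.congr fun q hq => pd₂_eq_fderiv
    ((hf.differentiableOn (by simp)).differentiableAt (hD.mem_nhds hq))

lemma pd_comm {D : Set (ℝ × ℝ)} (hD : IsOpen D) {f : ℝ × ℝ → ℝ}
    (hf : ContDiffOn ℝ (⊤ : ℕ∞) f D) {p : ℝ × ℝ} (hp : p ∈ D) :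
    pd₁ (pd₂ f) p = pd₂ (pd₁ f) p := by
  have hdf : ∀ q ∈ D, DifferentiableAt ℝ f q := fun q hq =>
    (hf.differentiableOn (by simp)).differentiableAt (hD.mem_nhds hq)
  have hfd : ContDiffOn ℝ (⊤ : ℕ∞) (fderiv ℝ f) D := hf.fderiv_of_isOpen hD (by simp)
  have hFd : DifferentiableAt ℝ (fderiv ℝ f) p :=
    (hfd.differentiableOn (by simp)).differentiableAt (hD.mem_nhds hp)
  set F := fderiv ℝ (fderiv ℝ f) p with hF
  have hFh : HasFDerivAt (fderiv ℝ f) F p := hFd.hasFDerivAt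
  -- symmetry of second derivative
  have hsymm : ∀ v w, F v w = F w v := by
    intro v w
    refine second_derivative_symmetric_of_eventually (f := f) ?_ hFh v w
    filter_upwards [hD.mem_nhds hp] with q hq using (hdf q hq).hasFDerivAt
  -- compute pd₁ (pd₂ f) p
  have h1 : pd₁ (pd₂ f) p = F (1, 0) (0, 1) := by
    have hev : (fun u => pd₂ f (u, p.2)) =ᶠ[nhds p.1]
        (fun u => fderiv ℝ f (u, p.2) ((0 : ℝ), (1 : ℝ))) := by
      have hopen : IsOpen {u : ℝ | (u, p.2) ∈ D} :=
        hD.preimage (by fun_prop : Continuous fun u : ℝ => (u, p.2))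
      filter_upwards [hopen.mem_nhds (by exact hp : (p.1, p.2) ∈ D)] with u hu
      exact pd₂_eq_fderiv (hdf _ hu)
    have hd : HasDerivAt (fun u => fderiv ℝ f (u, p.2) ((0 : ℝ), (1 : ℝ)))
        (F (1, 0) (0, 1)) p.1 := by
      have hc : HasDerivAt (fun u => fderiv ℝ f (u, p.2)) (F (1, 0)) p.1 :=
        hFh.comp_hasDerivAt p.1 ((hasDerivAt_id p.1).prodMk (hasDerivAt_const _ _))
      simpa using hc.clm_apply (hasDerivAt_const p.1 ((0 : ℝ), (1 : ℝ)))
    calc pd₁ (pd₂ f) p = deriv (fun u => fderiv ℝ f (u, p.2) ((0 : ℝ), (1 : ℝ))) p.1 :=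
          hev.deriv_eq
      _ = F (1, 0) (0, 1) := hd.deriv
  have h2 : pd₂ (pd₁ f) p = F (0, 1) (1, 0) := by
    have hev : (fun v => pd₁ f (p.1, v)) =ᶠ[nhds p.2]
        (fun v => fderiv ℝ f (p.1, v) ((1 : ℝ), (0 : ℝ))) := by
      have hopen : IsOpen {v : ℝ | (p.1, v) ∈ D} :=
        hD.preimage (by fun_prop : Continuous fun v : ℝ => (p.1, v))
      filter_upwards [hopen.mem_nhds (by exact hp : (p.1, p.2) ∈ D)] with v hv
      exact pd₁_eq_fderiv (hdf _ hv)
    have hd : HasDerivAt (fun v => fderiv ℝ f (p.1, v) ((1 : ℝ), (0 : ℝ)))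
        (F (0, 1) (1, 0)) p.2 := by
      have hc : HasDerivAt (fun v => fderiv ℝ f (p.1, v)) (F (0, 1)) p.2 :=
        hFh.comp_hasDerivAt p.2 ((hasDerivAt_const _ _).prodMk (hasDerivAt_id p.2))
      simpa using hc.clm_apply (hasDerivAt_const p.2 ((1 : ℝ), (0 : ℝ)))
    calc pd₂ (pd₁ f) p = deriv (fun v => fderiv ℝ f (p.1, v) ((1 : ℝ), (0 : ℝ))) p.2 :=
          hev.deriv_eq
      _ = F (0, 1) (1, 0) := hd.deriv
  rw [h1, h2, hsymm]

lemma key {D : Set (ℝ × ℝ)} (hD : IsOpen D) {ω Q R H u₀ v₀ : ℝ × ℝ → ℝ}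
    (hω : ContDiffOn ℝ (⊤ : ℕ∞) ω D) (hQ : ContDiffOn ℝ (⊤ : ℕ∞) Q D)
    (hR : ContDiffOn ℝ (⊤ : ℕ∞) R D) (hH : ContDiffOn ℝ (⊤ : ℕ∞) H D)
    (hu₀ : ContDiffOn ℝ (⊤ : ℕ∞) u₀ D) (hv₀ : ContDiffOn ℝ (⊤ : ℕ∞) v₀ D)
    {p : ℝ × ℝ} (hp : p ∈ D) :
    (∀ i j : Fin 2,
        pd₂ (fun q => Umat ω Q H u₀ q i j) p - pd₁ (fun q => Vmat ω R H v₀ q i j) p =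
          (Umat ω Q H u₀ p * Vmat ω R H v₀ p - Vmat ω R H v₀ p * Umat ω Q H u₀ p) i j) ↔
    (pd₂ u₀ p = pd₁ v₀ p ∧
        pd₂ (pd₁ ω) p + (1 / 2) * (H p) ^ 2 * Real.exp (ω p) -
            2 * Q p * R p * Real.exp (-(ω p)) = 0 ∧
        pd₁ H p = 2 * Real.exp (-(ω p)) * pd₂ Q p ∧
        pd₂ H p = 2 * Real.exp (-(ω p)) * pd₁ R p) := by
  have dAt : ∀ {g : ℝ × ℝ → ℝ}, ContDiffOn ℝ (⊤ : ℕ∞) g D → DifferentiableAt ℝ g p :=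
    fun h => (h.differentiableOn (by simp)).differentiableAt (hD.mem_nhds hp)
  have hω1 := hasDerivAt_pd₁ (dAt hω)
  have hω2 := hasDerivAt_pd₂ (dAt hω)
  have hQ2 := hasDerivAt_pd₂ (dAt hQ)
  have hR1 := hasDerivAt_pd₁ (dAt hR)
  have hH1 := hasDerivAt_pd₁ (dAt hH)
  have hH2 := hasDerivAt_pd₂ (dAt hH)
  have hu02 := hasDerivAt_pd₂ (dAt hu₀)
  have hv01 := hasDerivAt_pd₁ (dAt hv₀)
  have hpω12 := hasDerivAt_pd₂ (dAt (contDiffOn_pd₁ hD hω))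
  have hpω21 := hasDerivAt_pd₁ (dAt (contDiffOn_pd₂ hD hω))
  -- LHS derivatives of U entries
  have LU00 : pd₂ (fun q => Umat ω Q H u₀ q 0 0) p
      = pd₂ u₀ p + -(pd₂ (pd₁ ω) p) / 4 := by
    have hfun : (fun q => Umat ω Q H u₀ q 0 0) = fun q => u₀ q + -(pd₁ ω q) / 4 := by
      funext q; simp [Umat]
    rw [hfun]
    exact (hu02.add ((hpω12.neg).div_const 4)).deriv
  have LU11 : pd₂ (fun q => Umat ω Q H u₀ q 1 1) p
      = pd₂ u₀ p + pd₂ (pd₁ ω) p / 4 := by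
    have hfun : (fun q => Umat ω Q H u₀ q 1 1) = fun q => u₀ q + pd₁ ω q / 4 := by
      funext q; simp [Umat]
    rw [hfun]
    exact (hu02.add (hpω12.div_const 4)).deriv
  have LU01 : pd₂ (fun q => Umat ω Q H u₀ q 0 1) p
      = -(pd₂ Q p) * Real.exp (-(ω p) / 2)
        + -(Q p) * (Real.exp (-(ω p) / 2) * (-(pd₂ ω p) / 2)) := by
    have hfun : (fun q => Umat ω Q H u₀ q 0 1)
        = fun q => -(Q q) * Real.exp (-(ω q) / 2) := by
      funext q; simp [Umat]
    rw [hfun]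
    exact ((hQ2.neg).mul ((hω2.neg.div_const 2).exp)).deriv
  have LU10 : pd₂ (fun q => Umat ω Q H u₀ q 1 0) p
      = pd₂ H p / 2 * Real.exp (ω p / 2)
        + H p / 2 * (Real.exp (ω p / 2) * (pd₂ ω p / 2)) := by
    have hfun : (fun q => Umat ω Q H u₀ q 1 0)
        = fun q => H q / 2 * Real.exp (ω q / 2) := by
      funext q; simp [Umat]
    rw [hfun]
    exact ((hH2.div_const 2).mul ((hω2.div_const 2).exp)).deriv
  -- derivatives of V entries
  have LV00 : pd₁ (fun q => Vmat ω R H v₀ q 0 0) p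
      = pd₁ v₀ p + pd₂ (pd₁ ω) p / 4 := by
    have hfun : (fun q => Vmat ω R H v₀ q 0 0) = fun q => v₀ q + pd₂ ω q / 4 := by
      funext q; simp [Vmat]
    rw [hfun, ← pd_comm hD hω hp]
    exact (hv01.add (hpω21.div_const 4)).deriv
  have LV11 : pd₁ (fun q => Vmat ω R H v₀ q 1 1) p
      = pd₁ v₀ p + -(pd₂ (pd₁ ω) p) / 4 := by
    have hfun : (fun q => Vmat ω R H v₀ q 1 1) = fun q => v₀ q + -(pd₂ ω q) / 4 := by
      funext q; simp [Vmat]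
    rw [hfun, ← pd_comm hD hω hp]
    exact (hv01.add ((hpω21.neg).div_const 4)).deriv
  have LV01 : pd₁ (fun q => Vmat ω R H v₀ q 0 1) p
      = -(pd₁ H p) / 2 * Real.exp (ω p / 2)
        + -(H p) / 2 * (Real.exp (ω p / 2) * (pd₁ ω p / 2)) := by
    have hfun : (fun q => Vmat ω R H v₀ q 0 1)
        = fun q => -(H q) / 2 * Real.exp (ω q / 2) := by
      funext q; simp [Vmat]
    rw [hfun]
    exact (((hH1.neg).div_const 2).mul ((hω1.div_const 2).exp)).deriv
  have LV10 : pd₁ (fun q => Vmat ω R H v₀ q 1 0) p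
      = pd₁ R p * Real.exp (-(ω p) / 2)
        + R p * (Real.exp (-(ω p) / 2) * (-(pd₁ ω p) / 2)) := by
    have hfun : (fun q => Vmat ω R H v₀ q 1 0)
        = fun q => R q * Real.exp (-(ω q) / 2) := by
      funext q; simp [Vmat]
    rw [hfun]
    exact (hR1.mul ((hω1.neg.div_const 2).exp)).deriv
  -- RHS commutator entries
  have R00 : (Umat ω Q H u₀ p * Vmat ω R H v₀ p - Vmat ω R H v₀ p * Umat ω Q H u₀ p) 0 0
      = H p / 2 * Real.exp (ω p / 2) * (H p / 2 * Real.exp (ω p / 2))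
        - Q p * Real.exp (-(ω p) / 2) * (R p * Real.exp (-(ω p) / 2)) := by
    simp [Umat, Vmat, Matrix.mul_apply, Fin.sum_univ_two, Matrix.one_apply]; ring
  have R11 : (Umat ω Q H u₀ p * Vmat ω R H v₀ p - Vmat ω R H v₀ p * Umat ω Q H u₀ p) 1 1
      = -(H p / 2 * Real.exp (ω p / 2) * (H p / 2 * Real.exp (ω p / 2))
        - Q p * Real.exp (-(ω p) / 2) * (R p * Real.exp (-(ω p) / 2))) := by
    simp [Umat, Vmat, Matrix.mul_apply, Fin.sum_univ_two, Matrix.one_apply]; ring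
  have R01 : (Umat ω Q H u₀ p * Vmat ω R H v₀ p - Vmat ω R H v₀ p * Umat ω Q H u₀ p) 0 1
      = pd₁ ω p * (H p / 2 * Real.exp (ω p / 2)) / 2
        + Q p * Real.exp (-(ω p) / 2) * pd₂ ω p / 2 := by
    simp [Umat, Vmat, Matrix.mul_apply, Fin.sum_univ_two, Matrix.one_apply]; ring
  have R10 : (Umat ω Q H u₀ p * Vmat ω R H v₀ p - Vmat ω R H v₀ p * Umat ω Q H u₀ p) 1 0
      = H p / 2 * Real.exp (ω p / 2) * pd₂ ω p / 2
        + pd₁ ω p * (R p * Real.exp (-(ω p) / 2)) / 2 := by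
    simp [Umat, Vmat, Matrix.mul_apply, Fin.sum_univ_two, Matrix.one_apply]; ring
  -- exp facts
  have hef : Real.exp (ω p / 2) * Real.exp (-(ω p) / 2) = 1 := by
    rw [← Real.exp_add]; ring_nf; exact Real.exp_zero
  have hee : Real.exp (ω p / 2) * Real.exp (ω p / 2) = Real.exp (ω p) := by
    rw [← Real.exp_add]; ring_nf
  have hff : Real.exp (-(ω p) / 2) * Real.exp (-(ω p) / 2) = Real.exp (-(ω p)) := by
    rw [← Real.exp_add]; ring_nf
  constructor
  · intro h
    have h00 := h 0 0; have h01 := h 0 1; have h10 := h 1 0; have h11 := h 1 1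
    rw [LU00, LV00, R00] at h00
    rw [LU01, LV01, R01] at h01
    rw [LU10, LV10, R10] at h10
    rw [LU11, LV11, R11] at h11
    refine ⟨by linarith, ?_, ?_, ?_⟩
    · linear_combination h11 - h00 - (H p ^ 2 / 2) * hee + 2 * Q p * R p * hff
    · linear_combination 2 * Real.exp (-(ω p) / 2) * h01
        - pd₁ H p * hef + 2 * pd₂ Q p * hff
    · linear_combination 2 * Real.exp (-(ω p) / 2) * h10
        - pd₂ H p * hef + 2 * pd₁ R p * hff
  · rintro ⟨h1, h2, h3, h4⟩
    intro i j
    have hcase : ∀ k : Fin 2, k = 0 ∨ k = 1 := by decide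
    rcases hcase i with rfl | rfl <;> rcases hcase j with rfl | rfl
    · rw [LU00, LV00, R00]
      linear_combination h1 - h2 / 2 - (H p ^ 2 / 4) * hee + Q p * R p * hff
    · rw [LU01, LV01, R01]
      linear_combination (Real.exp (ω p / 2) / 2) * h3
        + pd₂ Q p * Real.exp (-(ω p) / 2) * hef - pd₂ Q p * Real.exp (ω p / 2) * hff
    · rw [LU10, LV10, R10]
      linear_combination (Real.exp (ω p / 2) / 2) * h4
        + pd₁ R p * Real.exp (-(ω p) / 2) * hef - pd₁ R p * Real.exp (ω p / 2) * hff
    · rw [LU11, LV11, R11]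
      linear_combination h1 + h2 / 2 + (H p ^ 2 / 4) * hee - Q p * R p * hff

/-- the zero-curvature equation `∂U/∂v − ∂V/∂u = UV − VU`
(entrywise) holds on the open set `D` if and only if `∂u₀/∂v = ∂v₀/∂u` and the
Gauss–Codazzi equations
`ω_{uv} + ½H²e^{ω} − 2QRe^{−ω} = 0`, `H_u = 2e^{−ω}Q_v`, `H_v = 2e^{−ω}R_u`
hold on `D`. -/
theorem statement9 (D : Set (ℝ × ℝ)) (hD : IsOpen D)
    (ω Q R H u₀ v₀ : ℝ × ℝ → ℝ)
    (hω : ContDiffOn ℝ (⊤ : ℕ∞) ω D) (hQ : ContDiffOn ℝ (⊤ : ℕ∞) Q D)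
    (hR : ContDiffOn ℝ (⊤ : ℕ∞) R D) (hH : ContDiffOn ℝ (⊤ : ℕ∞) H D)
    (hu₀ : ContDiffOn ℝ (⊤ : ℕ∞) u₀ D) (hv₀ : ContDiffOn ℝ (⊤ : ℕ∞) v₀ D) :
    (∀ p ∈ D, ∀ i j : Fin 2,
        pd₂ (fun q => Umat ω Q H u₀ q i j) p - pd₁ (fun q => Vmat ω R H v₀ q i j) p =
          (Umat ω Q H u₀ p * Vmat ω R H v₀ p - Vmat ω R H v₀ p * Umat ω Q H u₀ p) i j) ↔
    (∀ p ∈ D,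
        pd₂ u₀ p = pd₁ v₀ p ∧
        pd₂ (pd₁ ω) p + (1 / 2) * (H p) ^ 2 * Real.exp (ω p) -
            2 * Q p * R p * Real.exp (-(ω p)) = 0 ∧
        pd₁ H p = 2 * Real.exp (-(ω p)) * pd₂ Q p ∧
        pd₂ H p = 2 * Real.exp (-(ω p)) * pd₁ R p) := by
  constructor
  · intro h p hp
    exact (key hD hω hQ hR hH hu₀ hv₀ hp).mp (h p hp)
  · intro h p hp
    exact (key hD hω hQ hR hH hu₀ hv₀ hp).mpr (h p hp)
end

section
/- Let I, J ⊆ ℝ be open intervals and let φ : I × J → ℝ³ be a smooth map such that at every point: ⟨φ_u, φ_u⟩ = 0, ⟨φ_v, φ_v⟩ = 0, ⟨φ_u, φ_v⟩ ≠ 0, and ⟨φ_{uv}, φ_u × φ_v⟩ = 0 (vanishing mean curvature). Then φ_{uv} = 0 identically, and consequently there exist smooth null curves X : I → ℝ³ and Y : J → ℝ³ (i.e. ⟨X', X'⟩ = 0 and ⟨Y', Y'⟩ = 0) such that φ(u, v) = X(u) + Y(v) for all (u, v). -/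
open Topology Filter

/-- The Minkowski scalar product `⟨x, y⟩ = −x₁y₁ + x₂y₂ + x₃y₃` on `ℝ³`. -/
def mink (x y : Fin 3 → ℝ) : ℝ := -(x 0 * y 0) + x 1 * y 1 + x 2 * y 2

/-- The Lorentzian vector product
`ξ × η = (ξ₃η₂ − ξ₂η₃, ξ₃η₁ − ξ₁η₃, ξ₁η₂ − ξ₂η₁)`. -/
def lcross (ξ η : Fin 3 → ℝ) : Fin 3 → ℝ :=
  ![ξ 2 * η 1 - ξ 1 * η 2, ξ 2 * η 0 - ξ 0 * η 2, ξ 0 * η 1 - ξ 1 * η 0]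

/-- Partial derivative in the first null variable `u`. -/
noncomputable def pdu (f : ℝ × ℝ → Fin 3 → ℝ) (p : ℝ × ℝ) : Fin 3 → ℝ :=
  deriv (fun u => f (u, p.2)) p.1

/-- Partial derivative in the second null variable `v`. -/
noncomputable def pdv (f : ℝ × ℝ → Fin 3 → ℝ) (p : ℝ × ℝ) : Fin 3 → ℝ :=
  deriv (fun v => f (p.1, v)) p.2

lemma cramer (a0 a1 a2 b0 b1 b2 w0 w1 w2 : ℝ)
    (ha : -(a0*a0)+a1*a1+a2*a2 = 0)
    (h1 : -(w0*a0)+w1*a1+w2*a2 = 0) (h2 : -(w0*b0)+w1*b1+w2*b2 = 0)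
    (h3 : -(w0*(a2*b1-a1*b2))+w1*(a2*b0-a0*b2)+w2*(a0*b1-a1*b0) = 0)
    (hm : -(a0*b0)+a1*b1+a2*b2 ≠ 0) : w0 = 0 ∧ w1 = 0 ∧ w2 = 0 := by
  set m := -(a0*b0)+a1*b1+a2*b2 with hmdef
  have hm2 : m^2 ≠ 0 := pow_ne_zero 2 hm
  refine ⟨?_, ?_, ?_⟩
  · have : w0 * m^2 = 0 := by
      linear_combination (m*b0 - (-(b0*b0)+b1*b1+b2*b2)*a0) * h1
        + (m*a0 - (-(a0*a0)+a1*a1+a2*a2)*b0) * h2 + (a2*b1-a1*b2) * h3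
        + (w0 * (-(b0*b0)+b1*b1+b2*b2)) * ha
    exact by simpa [hm2] using mul_eq_zero.mp this
  · have : w1 * m^2 = 0 := by
      linear_combination (m*b1 - (-(b0*b0)+b1*b1+b2*b2)*a1) * h1
        + (m*a1 - (-(a0*a0)+a1*a1+a2*a2)*b1) * h2 + (a2*b0-a0*b2) * h3
        + (w1 * (-(b0*b0)+b1*b1+b2*b2)) * ha
    exact by simpa [hm2] using mul_eq_zero.mp this
  · have : w2 * m^2 = 0 := by
      linear_combination (m*b2 - (-(b0*b0)+b1*b1+b2*b2)*a2) * h1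
        + (m*a2 - (-(a0*a0)+a1*a1+a2*a2)*b2) * h2 + (a0*b1-a1*b0) * h3
        + (w2 * (-(b0*b0)+b1*b1+b2*b2)) * ha
    exact by simpa [hm2] using mul_eq_zero.mp this

lemma mink_key {a b w : Fin 3 → ℝ} (ha : mink a a = 0) (hb : mink b b = 0)
    (hm : mink a b ≠ 0) (h1 : mink w a = 0) (h2 : mink w b = 0)
    (h3 : mink w (lcross a b) = 0) : w = 0 := by
  simp only [mink, lcross, Matrix.cons_val_zero, Matrix.cons_val_one, Matrix.head_cons,
    Matrix.cons_val_two, Matrix.tail_cons] at *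
  obtain ⟨k0, k1, k2⟩ := cramer (a 0) (a 1) (a 2) (b 0) (b 1) (b 2) (w 0) (w 1) (w 2)
    ha h1 h2 h3 hm
  funext i
  fin_cases i <;> simpa

lemma const_of_deriv_zero {f : ℝ → Fin 3 → ℝ} {s : Set ℝ} (hs : Convex ℝ s)
    (hso : IsOpen s) (h : ∀ x ∈ s, HasDerivAt f 0 x) {x y : ℝ} (hx : x ∈ s) (hy : y ∈ s) :
    f x = f y := by
  refine hs.is_const_of_fderivWithin_eq_zero
    (fun z hz => ((h z hz).differentiableAt).differentiableWithinAt) (fun z hz => ?_) hx hy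
  rw [fderivWithin_of_isOpen hso hz]
  have h0 : HasFDerivAt f (0 : ℝ →L[ℝ] (Fin 3 → ℝ)) z := by
    have := hasDerivAt_iff_hasFDerivAt.mp (h z hz)
    convert this using 1
    ext x i <;> simp
    ext x i; simp
  exact h0.fderiv

lemma comp_proj {g : ℝ → Fin 3 → ℝ} {w : Fin 3 → ℝ} {t : ℝ} (h : HasDerivAt g w t) (i : Fin 3) :
    HasDerivAt (fun t => g t i) (w i) t := by
  exact hasDerivAt_pi.mp h i

lemma hasDerivAt_mink {g h : ℝ → Fin 3 → ℝ} {w z : Fin 3 → ℝ} {t : ℝ}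
    (hg : HasDerivAt g w t) (hh : HasDerivAt h z t) :
    HasDerivAt (fun t => mink (g t) (h t)) (mink w (h t) + mink (g t) z) t := by
  have h0 := (comp_proj hg 0).mul (comp_proj hh 0)
  have h1 := (comp_proj hg 1).mul (comp_proj hh 1)
  have h2 := (comp_proj hg 2).mul (comp_proj hh 2)
  have h3 := (h0.neg.add h1).add h2
  simp only [mink]
  exact h3.congr_deriv (by ring)

/-- a conformal timelike immersion `φ` of `I × J` into Minkowski
3-space (`⟨φ_u, φ_u⟩ = ⟨φ_v, φ_v⟩ = 0`, `⟨φ_u, φ_v⟩ ≠ 0`) with vanishing mean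
curvature (`⟨φ_{uv}, φ_u × φ_v⟩ = 0`) satisfies `φ_{uv} = 0`, and hence is a sum
`φ(u, v) = X(u) + Y(v)` of null curves. -/
theorem statement11 (I J : Set ℝ)
    (hIopen : IsOpen I) (hIconv : Convex ℝ I) (hJopen : IsOpen J) (hJconv : Convex ℝ J)
    (hIne : I.Nonempty) (hJne : J.Nonempty)
    (φ : ℝ × ℝ → Fin 3 → ℝ) (hφ : ContDiffOn ℝ (⊤ : ℕ∞) φ (I ×ˢ J))
    (hnull₁ : ∀ p ∈ I ×ˢ J, mink (pdu φ p) (pdu φ p) = 0)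
    (hnull₂ : ∀ p ∈ I ×ˢ J, mink (pdv φ p) (pdv φ p) = 0)
    (hconf : ∀ p ∈ I ×ˢ J, mink (pdu φ p) (pdv φ p) ≠ 0)
    (hmin : ∀ p ∈ I ×ˢ J, mink (pdv (pdu φ) p) (lcross (pdu φ p) (pdv φ p)) = 0) :
    (∀ p ∈ I ×ˢ J, pdv (pdu φ) p = 0) ∧
    ∃ X Y : ℝ → Fin 3 → ℝ, ContDiffOn ℝ (⊤ : ℕ∞) X I ∧ ContDiffOn ℝ (⊤ : ℕ∞) Y J ∧
      (∀ u ∈ I, mink (deriv X u) (deriv X u) = 0) ∧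
      (∀ v ∈ J, mink (deriv Y v) (deriv Y v) = 0) ∧
      ∀ u ∈ I, ∀ v ∈ J, φ (u, v) = X u + Y v := by
  have hU : IsOpen (I ×ˢ J) := hIopen.prod hJopen
  set U : Set (ℝ × ℝ) := I ×ˢ J with hUdef
  set F : ℝ × ℝ → (ℝ × ℝ) →L[ℝ] (Fin 3 → ℝ) := fun p => fderiv ℝ φ p with hFdef
  have hφat : ∀ p ∈ U, ContDiffAt ℝ (⊤ : ℕ∞) φ p := fun p hp => hφ.contDiffAt (hU.mem_nhds hp)
  have hFd : ∀ p ∈ U, HasFDerivAt φ (F p) p := fun p hp =>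
    ((hφat p hp).differentiableAt (by simp)).hasFDerivAt
  have hFs : ContDiffOn ℝ (⊤ : ℕ∞) F U := hφ.fderiv_of_isOpen hU (by simp)
  have hFdiff : ∀ p ∈ U, DifferentiableAt ℝ F p := fun p hp =>
    (hFs.contDiffAt (hU.mem_nhds hp)).differentiableAt (by simp)
  set H : ℝ × ℝ → (ℝ × ℝ) →L[ℝ] (ℝ × ℝ) →L[ℝ] (Fin 3 → ℝ) := fun p => fderiv ℝ F p with hHdef
  have hHd : ∀ p ∈ U, HasFDerivAt F (H p) p := fun p hp => (hFdiff p hp).hasFDerivAt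
  have hsymm : ∀ p ∈ U, ∀ ξ η, H p ξ η = H p η ξ := fun p hp ξ η =>
    second_derivative_symmetric_of_eventually
      (Filter.eventually_of_mem (hU.mem_nhds hp) (fun q hq => hFd q hq)) (hHd p hp) ξ η
  have hcu : ∀ p : ℝ × ℝ, HasDerivAt (fun u : ℝ => (u, p.2)) ((1:ℝ), (0:ℝ)) p.1 :=
    fun p => (hasDerivAt_id p.1).prodMk (hasDerivAt_const p.1 p.2)
  have hcv : ∀ p : ℝ × ℝ, HasDerivAt (fun v : ℝ => (p.1, v)) ((0:ℝ), (1:ℝ)) p.2 :=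
    fun p => (hasDerivAt_const p.2 p.1).prodMk (hasDerivAt_id p.2)
  have hpduD : ∀ p ∈ U, HasDerivAt (fun u => φ (u, p.2)) (F p (1, 0)) p.1 := fun p hp =>
    (hFd p hp).comp_hasDerivAt p.1 (hcu p)
  have hpdvD : ∀ p ∈ U, HasDerivAt (fun v => φ (p.1, v)) (F p (0, 1)) p.2 := fun p hp =>
    (hFd p hp).comp_hasDerivAt p.2 (hcv p)
  have hpdu_eq : ∀ p ∈ U, pdu φ p = F p (1, 0) := fun p hp => (hpduD p hp).deriv
  have hpdv_eq : ∀ p ∈ U, pdv φ p = F p (0, 1) := fun p hp => (hpdvD p hp).deriv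
  have hnbv : ∀ p ∈ U, ∀ᶠ v in 𝓝 p.2, (p.1, v) ∈ U := by
    intro p hp
    filter_upwards [hJopen.mem_nhds hp.2] with v hv
    exact ⟨hp.1, hv⟩
  have hnbu : ∀ p ∈ U, ∀ᶠ u in 𝓝 p.1, (u, p.2) ∈ U := by
    intro p hp
    filter_upwards [hIopen.mem_nhds hp.1] with u hu
    exact ⟨hu, hp.2⟩
  -- second derivatives along lines
  have hGud : ∀ p ∈ U, HasDerivAt (fun v => pdu φ (p.1, v)) (H p (0,1) (1,0)) p.2 := by
    intro p hp
    have e1 : HasFDerivAt (fun q => F q ((1:ℝ),(0:ℝ)))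
        ((ContinuousLinearMap.apply ℝ (Fin 3 → ℝ) ((1:ℝ),(0:ℝ))).comp (H p)) p :=
      (ContinuousLinearMap.apply ℝ (Fin 3 → ℝ) ((1:ℝ),(0:ℝ))).hasFDerivAt.comp p (hHd p hp)
    have e2 : HasDerivAt (fun v => F (p.1, v) ((1:ℝ),(0:ℝ))) (H p (0,1) (1,0)) p.2 := by
      simpa [Function.comp_def] using e1.comp_hasDerivAt p.2 (hcv p)
    refine e2.congr_of_eventuallyEq ?_
    filter_upwards [hnbv p hp] with v hv
    exact hpdu_eq (p.1, v) hv
  have hGvd : ∀ p ∈ U, HasDerivAt (fun u => pdv φ (u, p.2)) (H p (1,0) (0,1)) p.1 := by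
    intro p hp
    have e1 : HasFDerivAt (fun q => F q ((0:ℝ),(1:ℝ)))
        ((ContinuousLinearMap.apply ℝ (Fin 3 → ℝ) ((0:ℝ),(1:ℝ))).comp (H p)) p :=
      (ContinuousLinearMap.apply ℝ (Fin 3 → ℝ) ((0:ℝ),(1:ℝ))).hasFDerivAt.comp p (hHd p hp)
    have e2 : HasDerivAt (fun u => F (u, p.2) ((0:ℝ),(1:ℝ))) (H p (1,0) (0,1)) p.1 := by
      simpa [Function.comp_def] using e1.comp_hasDerivAt p.1 (hcu p)
    refine e2.congr_of_eventuallyEq ?_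
    filter_upwards [hnbu p hp] with u hu
    exact hpdv_eq (u, p.2) hu
  have pdvpdu_eq : ∀ p ∈ U, pdv (pdu φ) p = H p (0,1) (1,0) := fun p hp => (hGud p hp).deriv
  -- Part 1: φ_uv = 0
  have hWzero : ∀ p ∈ U, pdv (pdu φ) p = 0 := by
    intro p hp
    have hwH : pdv (pdu φ) p = H p (0,1) (1,0) := pdvpdu_eq p hp
    have h1 : mink (pdv (pdu φ) p) (pdu φ p) = 0 := by
      have hq := hasDerivAt_mink (hGud p hp) (hGud p hp)
      have hz : deriv (fun v => mink (pdu φ (p.1,v)) (pdu φ (p.1,v))) p.2 = 0 := by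
        have he : (fun v => mink (pdu φ (p.1,v)) (pdu φ (p.1,v))) =ᶠ[𝓝 p.2]
            (fun _ => (0:ℝ)) := by
          filter_upwards [hnbv p hp] with v hv
          exact hnull₁ (p.1, v) hv
        rw [he.deriv_eq]
        simp
      have hD : mink (H p (0,1) (1,0)) (pdu φ (p.1, p.2))
          + mink (pdu φ (p.1, p.2)) (H p (0,1) (1,0)) = 0 := by
        rw [← hq.deriv]; exact hz
      rw [← hwH] at hD
      have hD' : mink (pdv (pdu φ) p) (pdu φ p)
          + mink (pdu φ p) (pdv (pdu φ) p) = 0 := hD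
      simp only [mink] at hD' ⊢
      linear_combination hD' / 2
    have h2 : mink (pdv (pdu φ) p) (pdv φ p) = 0 := by
      have hq := hasDerivAt_mink (hGvd p hp) (hGvd p hp)
      have hz : deriv (fun u => mink (pdv φ (u,p.2)) (pdv φ (u,p.2))) p.1 = 0 := by
        have he : (fun u => mink (pdv φ (u,p.2)) (pdv φ (u,p.2))) =ᶠ[𝓝 p.1]
            (fun _ => (0:ℝ)) := by
          filter_upwards [hnbu p hp] with u hu
          exact hnull₂ (u, p.2) hu
        rw [he.deriv_eq]
        simp
      have hD : mink (H p (1,0) (0,1)) (pdv φ (p.1, p.2))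
          + mink (pdv φ (p.1, p.2)) (H p (1,0) (0,1)) = 0 := by
        rw [← hq.deriv]; exact hz
      rw [← hsymm p hp (0,1) (1,0), ← hwH] at hD
      have hD' : mink (pdv (pdu φ) p) (pdv φ p)
          + mink (pdv φ p) (pdv (pdu φ) p) = 0 := hD
      simp only [mink] at hD' ⊢
      linear_combination hD' / 2
    exact mink_key (hnull₁ p hp) (hnull₂ p hp) (hconf p hp) h1 h2 (hmin p hp)
  -- derivative of pdv in u vanishes
  have hGvd0 : ∀ p ∈ U, HasDerivAt (fun u => pdv φ (u, p.2)) 0 p.1 := by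
    intro p hp
    have h := hGvd p hp
    rwa [hsymm p hp (1,0) (0,1), ← pdvpdu_eq p hp, hWzero p hp] at h
  obtain ⟨u₀, hu₀⟩ := hIne
  obtain ⟨v₀, hv₀⟩ := hJne
  have hconst1 : ∀ u ∈ I, ∀ v ∈ J, pdv φ (u, v) = pdv φ (u₀, v) := by
    intro u hu v hv
    exact const_of_deriv_zero (f := fun x => pdv φ (x, v)) hIconv hIopen
      (fun x hx => hGvd0 (x, v) ⟨hx, hv⟩) hu hu₀
  have hsum : ∀ u ∈ I, ∀ v ∈ J, φ (u, v) - φ (u₀, v) = φ (u, v₀) - φ (u₀, v₀) := by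
    intro u hu v hv
    have hd : ∀ x ∈ J, HasDerivAt (fun v => φ (u, v) - φ (u₀, v)) 0 x := by
      intro x hx
      have h1 := hpdvD (u, x) ⟨hu, hx⟩
      have h2 := hpdvD (u₀, x) ⟨hu₀, hx⟩
      have heq : F (u, x) (0,1) - F (u₀, x) (0,1) = 0 := by
        rw [← hpdv_eq (u,x) ⟨hu,hx⟩, ← hpdv_eq (u₀,x) ⟨hu₀,hx⟩, hconst1 u hu x hx, sub_self]
      simpa [heq, Pi.sub_def] using h1.sub h2
    exact const_of_deriv_zero hJconv hJopen hd hv hv₀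
  refine ⟨hWzero, fun u => φ (u, v₀), fun v => φ (u₀, v) - φ (u₀, v₀), ?_, ?_, ?_, ?_, ?_⟩
  · exact hφ.comp ((contDiff_id.prodMk contDiff_const).contDiffOn) (fun u hu => ⟨hu, hv₀⟩)
  · exact (hφ.comp ((contDiff_const.prodMk contDiff_id).contDiffOn)
      (fun v hv => ⟨hu₀, hv⟩)).sub contDiffOn_const
  · intro u hu
    simpa [pdu] using hnull₁ (u, v₀) ⟨hu, hv₀⟩
  · intro v hv
    have hD : HasDerivAt (fun v => φ (u₀, v) - φ (u₀, v₀)) (F (u₀,v) (0,1)) v :=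
      (hpdvD (u₀,v) ⟨hu₀,hv⟩).sub_const _
    rw [hD.deriv, ← hpdv_eq (u₀,v) ⟨hu₀,hv⟩]
    exact hnull₂ (u₀,v) ⟨hu₀,hv⟩
  · intro u hu v hv
    have h := hsum u hu v hv
    linear_combination h
end

section
/- Let X : I → ℝ³ and Y : J → ℝ³ be smooth curves with ⟨X', X'⟩ = 0 and ⟨Y', Y'⟩ = 0, let φ(u, v) = X(u) + Y(v) and let φ̂(u, v) = X(u) − Y(v) be the conjugate timelike minimal surface. Then φ̂ is anti isometric to φ: for every (u, v) ∈ I × J and every (a, b) ∈ ℝ², ⟨a φ̂_u + b φ̂_v, a φ̂_u + b φ̂_v⟩ = −⟨a φ_u + b φ_v, a φ_u + b φ_v⟩. -/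
/-- the conjugate timelike minimal surface `φ̂ = X − Y` is anti
isometric to `φ = X + Y`: the induced first fundamental forms are negatives of
each other. -/
theorem statement13 (I J : Set ℝ)
    (hIopen : IsOpen I) (hIconv : Convex ℝ I) (hJopen : IsOpen J) (hJconv : Convex ℝ J)
    (X Y : ℝ → Fin 3 → ℝ) (hX : ContDiffOn ℝ (⊤ : ℕ∞) X I) (hY : ContDiffOn ℝ (⊤ : ℕ∞) Y J)
    (hXnull : ∀ u ∈ I, mink (deriv X u) (deriv X u) = 0)
    (hYnull : ∀ v ∈ J, mink (deriv Y v) (deriv Y v) = 0) :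
    ∀ u ∈ I, ∀ v ∈ J, ∀ a b : ℝ,
      mink (a • pdu (fun p => X p.1 - Y p.2) (u, v) + b • pdv (fun p => X p.1 - Y p.2) (u, v))
           (a • pdu (fun p => X p.1 - Y p.2) (u, v) + b • pdv (fun p => X p.1 - Y p.2) (u, v)) =
      -mink (a • pdu (fun p => X p.1 + Y p.2) (u, v) + b • pdv (fun p => X p.1 + Y p.2) (u, v))
            (a • pdu (fun p => X p.1 + Y p.2) (u, v) + b • pdv (fun p => X p.1 + Y p.2) (u, v)) := by
  intro u hu v hv a b
  have h1 : pdu (fun p => X p.1 - Y p.2) (u, v) = deriv X u := by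
    simp only [pdu]
    exact deriv_sub_const _
  have h2 : pdv (fun p => X p.1 - Y p.2) (u, v) = -deriv Y v := by
    simp only [pdv]
    exact deriv_const_sub _
  have h3 : pdu (fun p => X p.1 + Y p.2) (u, v) = deriv X u := by
    simp only [pdu]
    exact deriv_add_const _
  have h4 : pdv (fun p => X p.1 + Y p.2) (u, v) = deriv Y v := by
    simp only [pdv]
    exact deriv_const_add _
  have hx := hXnull u hu
  have hy := hYnull v hv
  rw [h1, h2, h3, h4]
  simp only [mink, Pi.add_apply, Pi.smul_apply, Pi.neg_apply, smul_eq_mul] at *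
  ring_nf
  ring_nf at hx hy
  linear_combination 2 * a ^ 2 * hx + 2 * b ^ 2 * hy
end

section
/- Let X : I → ℝ³ and Y : J → ℝ³ be smooth curves with ⟨X', X'⟩ = 0, ⟨Y', Y'⟩ = 0 and X'(u), Y'(v) linearly independent for all (u, v), let φ = X + Y and φ̂ = X − Y, and for λ > 0 define the associated family φ_λ(u, v) = λX(u) + λ⁻¹Y(v). Then with λ = e^{θ}: (i) φ_λ = cosh θ · φ + sinh θ · φ̂; (ii) each φ_λ is isometric to φ and minimal: ⟨∂_u φ_λ, ∂_u φ_λ⟩ = ⟨∂_v φ_λ, ∂_v φ_λ⟩ = 0, ⟨∂_u φ_λ, ∂_v φ_λ⟩ = ⟨∂_u φ, ∂_v φ⟩ and ∂_u∂_v φ_λ = 0; (iii) for every (u, v), the tangent plane span{∂_u φ_λ(u, v), ∂_v φ_λ(u, v)} equals span{∂_u φ(u, v), ∂_v φ(u, v)}, i.e. the tangent planes of the members of the associated family at corresponding points are mutually parallel. -/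
lemma mink_smul (a b : ℝ) (x y : Fin 3 → ℝ) :
    mink (a • x) (b • y) = a * b * mink x y := by
  simp [mink]; ring

lemma span_pair_smul (a b : ℝ) (ha : a ≠ 0) (hb : b ≠ 0) (x y : Fin 3 → ℝ) :
    Submodule.span ℝ {a • x, b • y} = Submodule.span ℝ {x, y} := by
  apply le_antisymm
  · rw [Submodule.span_le]
    intro z hz
    rcases hz with rfl | hz
    · exact Submodule.smul_mem _ _ (Submodule.subset_span (by simp))
    · rcases hz with rfl
      exact Submodule.smul_mem _ _ (Submodule.subset_span (by simp))
  · rw [Submodule.span_le]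
    intro z hz
    rcases hz with rfl | hz
    · have h1 : a • z ∈ Submodule.span ℝ {a • z, b • y} :=
        Submodule.subset_span (by simp)
      have h2 := Submodule.smul_mem _ a⁻¹ h1
      rwa [smul_smul, inv_mul_cancel₀ ha, one_smul] at h2
    · rcases hz with rfl
      have h1 : b • z ∈ Submodule.span ℝ {a • x, b • z} :=
        Submodule.subset_span (by simp)
      have h2 := Submodule.smul_mem _ b⁻¹ h1
      rwa [smul_smul, inv_mul_cancel₀ hb, one_smul] at h2

lemma pdu_smul_sum (X Y : ℝ → Fin 3 → ℝ) (a b : ℝ) (u v : ℝ) :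
    pdu (fun p => a • X p.1 + b • Y p.2) (u, v) = deriv (fun t => a • X t) u := by
  show deriv (fun t => a • X t + b • Y v) u = _
  exact deriv_add_const _

lemma pdv_smul_sum (X Y : ℝ → Fin 3 → ℝ) (a b : ℝ) (u v : ℝ) :
    pdv (fun p => a • X p.1 + b • Y p.2) (u, v) = deriv (fun t => b • Y t) v := by
  show deriv (fun t => a • X u + b • Y t) v = _
  exact deriv_const_add _

lemma pdu_sum (X Y : ℝ → Fin 3 → ℝ) (u v : ℝ) :
    pdu (fun p => X p.1 + Y p.2) (u, v) = deriv X u := by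
  show deriv (fun t => X t + Y v) u = _
  exact deriv_add_const _

lemma pdv_sum (X Y : ℝ → Fin 3 → ℝ) (u v : ℝ) :
    pdv (fun p => X p.1 + Y p.2) (u, v) = deriv Y v := by
  show deriv (fun t => X u + Y t) v = _
  exact deriv_const_add _

/-- for `φ = X + Y`, `φ̂ = X − Y` and the associated family
`φ_λ = λX + λ⁻¹Y` with `λ = e^θ > 0`:
(i) `φ_λ = cosh θ · φ + sinh θ · φ̂`;
(ii) each `φ_λ` is isometric to `φ` and minimal;
(iii) the tangent planes of `φ_λ` and `φ` at corresponding points coincide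
(are mutually parallel). -/
theorem statement14 (I J : Set ℝ)
    (hIopen : IsOpen I) (hIconv : Convex ℝ I) (hJopen : IsOpen J) (hJconv : Convex ℝ J)
    (X Y : ℝ → Fin 3 → ℝ) (hX : ContDiffOn ℝ (⊤ : ℕ∞) X I) (hY : ContDiffOn ℝ (⊤ : ℕ∞) Y J)
    (hXnull : ∀ u ∈ I, mink (deriv X u) (deriv X u) = 0)
    (hYnull : ∀ v ∈ J, mink (deriv Y v) (deriv Y v) = 0)
    (hindep : ∀ u ∈ I, ∀ v ∈ J, LinearIndependent ℝ ![deriv X u, deriv Y v])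
    (θ : ℝ) :
    (∀ u v : ℝ,
      Real.exp θ • X u + (Real.exp θ)⁻¹ • Y v =
        Real.cosh θ • (X u + Y v) + Real.sinh θ • (X u - Y v)) ∧
    (∀ u ∈ I, ∀ v ∈ J,
      mink (pdu (fun p => Real.exp θ • X p.1 + (Real.exp θ)⁻¹ • Y p.2) (u, v))
           (pdu (fun p => Real.exp θ • X p.1 + (Real.exp θ)⁻¹ • Y p.2) (u, v)) = 0 ∧
      mink (pdv (fun p => Real.exp θ • X p.1 + (Real.exp θ)⁻¹ • Y p.2) (u, v))
           (pdv (fun p => Real.exp θ • X p.1 + (Real.exp θ)⁻¹ • Y p.2) (u, v)) = 0 ∧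
      mink (pdu (fun p => Real.exp θ • X p.1 + (Real.exp θ)⁻¹ • Y p.2) (u, v))
           (pdv (fun p => Real.exp θ • X p.1 + (Real.exp θ)⁻¹ • Y p.2) (u, v)) =
        mink (pdu (fun p => X p.1 + Y p.2) (u, v)) (pdv (fun p => X p.1 + Y p.2) (u, v)) ∧
      pdv (pdu (fun p => Real.exp θ • X p.1 + (Real.exp θ)⁻¹ • Y p.2)) (u, v) = 0) ∧
    (∀ u ∈ I, ∀ v ∈ J,
      Submodule.span ℝ
          {pdu (fun p => Real.exp θ • X p.1 + (Real.exp θ)⁻¹ • Y p.2) (u, v),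
           pdv (fun p => Real.exp θ • X p.1 + (Real.exp θ)⁻¹ • Y p.2) (u, v)} =
        Submodule.span ℝ
          {pdu (fun p => X p.1 + Y p.2) (u, v), pdv (fun p => X p.1 + Y p.2) (u, v)}) := by
  have he : Real.exp θ ≠ 0 := (Real.exp_pos θ).ne'
  have hie : (Real.exp θ)⁻¹ ≠ 0 := inv_ne_zero he
  -- derivatives on the domain
  have hXd : ∀ u ∈ I, DifferentiableAt ℝ X u := fun u hu =>
    (hX.contDiffAt (hIopen.mem_nhds hu)).differentiableAt (by simp)
  have hYd : ∀ v ∈ J, DifferentiableAt ℝ Y v := fun v hv =>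
    (hY.contDiffAt (hJopen.mem_nhds hv)).differentiableAt (by simp)
  have hu_eq : ∀ u ∈ I, ∀ v : ℝ,
      pdu (fun p => Real.exp θ • X p.1 + (Real.exp θ)⁻¹ • Y p.2) (u, v)
        = Real.exp θ • deriv X u := by
    intro u hu v
    rw [pdu_smul_sum]; exact ((hXd u hu).hasDerivAt.const_smul (Real.exp θ)).deriv
  have hv_eq : ∀ v ∈ J, ∀ u : ℝ,
      pdv (fun p => Real.exp θ • X p.1 + (Real.exp θ)⁻¹ • Y p.2) (u, v)
        = (Real.exp θ)⁻¹ • deriv Y v := by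
    intro v hv u
    rw [pdv_smul_sum]; exact ((hYd v hv).hasDerivAt.const_smul (Real.exp θ)⁻¹).deriv
  refine ⟨?_, ?_, ?_⟩
  · intro u v
    funext i
    simp only [Pi.add_apply, Pi.smul_apply, Pi.sub_apply, smul_eq_mul,
      Real.cosh_eq, Real.sinh_eq, Real.exp_neg]
    ring
  · intro u hu v hv
    refine ⟨?_, ?_, ?_, ?_⟩
    · rw [hu_eq u hu v, mink_smul, hXnull u hu]; ring
    · rw [hv_eq v hv u, mink_smul, hYnull v hv]; ring
    · rw [hu_eq u hu v, hv_eq v hv u, mink_smul, pdu_sum, pdv_sum,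
        mul_inv_cancel₀ he, one_mul]
    · have : pdu (fun p => Real.exp θ • X p.1 + (Real.exp θ)⁻¹ • Y p.2)
          = fun p : ℝ × ℝ => deriv (fun t => Real.exp θ • X t) p.1 := by
        funext p
        exact pdu_smul_sum X Y _ _ p.1 p.2
      rw [this]
      unfold pdv
      simp
  · intro u hu v hv
    rw [hu_eq u hu v, hv_eq v hv u, pdu_sum, pdv_sum, span_pair_smul _ _ he hie]
end

section
/- Let I ⊆ ℝ be an open interval, γ : I → ℝ³ smooth, and let A = γ', B, C : I → ℝ³ be smooth vector fields with smooth functions k₁, k₂ : I → ℝ satisfying ⟨A, A⟩ = 0, ⟨B, B⟩ = 0, ⟨A, B⟩ = 1, ⟨C, C⟩ = 1, ⟨A, C⟩ = 0, ⟨B, C⟩ = 0, and the null Frenet equations A' = k₁C, B' = k₂C, C' = −k₂A − k₁B. Define the B-scroll φ(s, t) = γ(s) + t·B(s) on I × ℝ. Then: (i) E := ⟨φ_s, φ_s⟩ = t²k₂(s)², F := ⟨φ_s, φ_t⟩ = 1, G := ⟨φ_t, φ_t⟩ = 0, so EG − F² = −1 and φ is a timelike immersion; (ii) N := C − t k₂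 B satisfies ⟨N, N⟩ = 1, ⟨N, φ_s⟩ = 0, ⟨N, φ_t⟩ = 0; (iii) f := ⟨φ_{st}, N⟩ = k₂(s) and g := ⟨φ_{tt}, N⟩ = 0; (iv) with e := ⟨φ_{ss}, N⟩, the mean curvature (eG − 2fF + gE)/(2(EG − F²)) equals k₂(s) and the Gaussian curvature (eg − f²)/(EG − F²) equals k₂(s)². In particular the B-scroll of a null Frenet curve is a timelike surface with H = k₂ and K = k₂². -/
/-- Partial derivative in the first variable `s`. -/
noncomputable def pds (f : ℝ × ℝ → Fin 3 → ℝ) (p : ℝ × ℝ) : Fin 3 → ℝ :=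
  deriv (fun s => f (s, p.2)) p.1

/-- Partial derivative in the second variable `t`. -/
noncomputable def pdt (f : ℝ × ℝ → Fin 3 → ℝ) (p : ℝ × ℝ) : Fin 3 → ℝ :=
  deriv (fun t => f (p.1, t)) p.2

/-- The B-scroll `φ(s,t) = γ(s) + t·B(s)` of a null Frenet curve `γ`. -/
def bscroll (γ B : ℝ → Fin 3 → ℝ) (p : ℝ × ℝ) : Fin 3 → ℝ :=
  γ p.1 + p.2 • B p.1

/-- the B-scroll `φ(s,t) = γ(s) + tB(s)` of a null Frenet curve
`γ` with frame `(A, B, C)` and curvatures `k₁, k₂` is a timelike surface with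
first fundamental form `E = t²k₂²`, `F = 1`, `G = 0` (so `EG − F² = −1`), unit
normal `N = C − tk₂B`, second fundamental form `f = ⟨φ_{st}, N⟩ = k₂`,
`g = ⟨φ_{tt}, N⟩ = 0`, mean curvature `H = k₂` and Gaussian curvature `K = k₂²`. -/
theorem statement19 (I : Set ℝ) (hIopen : IsOpen I) (hIconv : Convex ℝ I)
    (γ A B C : ℝ → Fin 3 → ℝ) (k₁ k₂ : ℝ → ℝ)
    (hγ : ContDiffOn ℝ (⊤ : ℕ∞) γ I) (hA : ContDiffOn ℝ (⊤ : ℕ∞) A I) (hB : ContDiffOn ℝ (⊤ : ℕ∞) B I)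
    (hC : ContDiffOn ℝ (⊤ : ℕ∞) C I) (hk₁ : ContDiffOn ℝ (⊤ : ℕ∞) k₁ I) (hk₂ : ContDiffOn ℝ (⊤ : ℕ∞) k₂ I)
    (hAγ : ∀ s ∈ I, A s = deriv γ s)
    (hAA : ∀ s ∈ I, mink (A s) (A s) = 0)
    (hBB : ∀ s ∈ I, mink (B s) (B s) = 0)
    (hAB : ∀ s ∈ I, mink (A s) (B s) = 1)
    (hCC : ∀ s ∈ I, mink (C s) (C s) = 1)
    (hAC : ∀ s ∈ I, mink (A s) (C s) = 0)
    (hBC : ∀ s ∈ I, mink (B s) (C s) = 0)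
    (hA' : ∀ s ∈ I, deriv A s = k₁ s • C s)
    (hB' : ∀ s ∈ I, deriv B s = k₂ s • C s)
    (hC' : ∀ s ∈ I, deriv C s = -(k₂ s) • A s - k₁ s • B s) :
    ∀ s ∈ I, ∀ t : ℝ,
      let E := mink (pds (bscroll γ B) (s, t)) (pds (bscroll γ B) (s, t))
      let F := mink (pds (bscroll γ B) (s, t)) (pdt (bscroll γ B) (s, t))
      let G := mink (pdt (bscroll γ B) (s, t)) (pdt (bscroll γ B) (s, t))
      let N := C s - (t * k₂ s) • B s
      let e := mink (pds (pds (bscroll γ B)) (s, t)) N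
      let f := mink (pdt (pds (bscroll γ B)) (s, t)) N
      let g := mink (pdt (pdt (bscroll γ B)) (s, t)) N
      E = t ^ 2 * (k₂ s) ^ 2 ∧ F = 1 ∧ G = 0 ∧ E * G - F ^ 2 = -1 ∧
      mink N N = 1 ∧ mink N (pds (bscroll γ B) (s, t)) = 0 ∧
      mink N (pdt (bscroll γ B) (s, t)) = 0 ∧
      f = k₂ s ∧ g = 0 ∧
      (e * G - 2 * f * F + g * E) / (2 * (E * G - F ^ 2)) = k₂ s ∧
      (e * g - f ^ 2) / (E * G - F ^ 2) = (k₂ s) ^ 2 := by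
  intro s hs t
  have hsI := hIopen.mem_nhds hs
  have dgam : DifferentiableAt ℝ γ s := (hγ.contDiffAt hsI).differentiableAt (by simp)
  have dB : DifferentiableAt ℝ B s := (hB.contDiffAt hsI).differentiableAt (by simp)
  have hpds : ∀ u : ℝ, pds (bscroll γ B) (s, u) = A s + (u * k₂ s) • C s := by
    intro u
    have h1 : deriv (fun s' => γ s' + u • B s') s = deriv γ s + u • deriv B s := by
      rw [deriv_fun_add (g := fun y => u • B y) dgam (dB.const_smul u), deriv_fun_const_smul u dB]
    simp only [pds, bscroll]
    rw [h1, ← hAγ s hs, hB' s hs, smul_smul]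
  have hpdt : ∀ p : ℝ × ℝ, pdt (bscroll γ B) p = B p.1 := by
    intro p
    simp only [pdt, bscroll]
    rw [deriv_const_add]
    simp [deriv_smul_const]
  have hf : pdt (pds (bscroll γ B)) (s, t) = k₂ s • C s := by
    have h2 : (fun u => pds (bscroll γ B) (s, u)) = fun u => A s + u • (k₂ s • C s) := by
      funext u; rw [hpds u, smul_smul]
    simp only [pdt]
    rw [h2, deriv_const_add]
    simp [deriv_smul_const]
  have hg : pdt (pdt (bscroll γ B)) (s, t) = 0 := by
    have h3 : (fun u => pdt (bscroll γ B) (s, u)) = fun _ => B s := by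
      funext u; exact hpdt (s, u)
    show deriv (fun u => pdt (bscroll γ B) (s, u)) t = 0
    rw [h3, deriv_const]
  have hAA' := hAA s hs; have hBB' := hBB s hs; have hAB' := hAB s hs
  have hCC' := hCC s hs; have hAC' := hAC s hs; have hBC' := hBC s hs
  dsimp only
  rw [hpds t, hpdt (s, t), hf, hg]
  set a := A s with ha; set b := B s with hb; set c := C s with hc
  set k := k₂ s with hk
  simp only [mink, Pi.add_apply, Pi.sub_apply, Pi.smul_apply, Pi.zero_apply,
    smul_eq_mul] at *
  have hE : -((a 0 + t * k * c 0) * (a 0 + t * k * c 0)) +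
      (a 1 + t * k * c 1) * (a 1 + t * k * c 1) +
      (a 2 + t * k * c 2) * (a 2 + t * k * c 2) = t ^ 2 * k ^ 2 := by
    linear_combination hAA' + (2 * t * k) * hAC' + t ^ 2 * k ^ 2 * hCC'
  have hF : -((a 0 + t * k * c 0) * b 0) + (a 1 + t * k * c 1) * b 1 +
      (a 2 + t * k * c 2) * b 2 = 1 := by
    linear_combination hAB' + (t * k) * hBC'
  have hG : -(b 0 * b 0) + b 1 * b 1 + b 2 * b 2 = 0 := hBB'
  have hNN : -((c 0 - t * k * b 0) * (c 0 - t * k * b 0)) +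
      (c 1 - t * k * b 1) * (c 1 - t * k * b 1) +
      (c 2 - t * k * b 2) * (c 2 - t * k * b 2) = 1 := by
    linear_combination hCC' - (2 * t * k) * hBC' + t ^ 2 * k ^ 2 * hBB'
  have hNs : -((c 0 - t * k * b 0) * (a 0 + t * k * c 0)) +
      (c 1 - t * k * b 1) * (a 1 + t * k * c 1) +
      (c 2 - t * k * b 2) * (a 2 + t * k * c 2) = 0 := by
    linear_combination hAC' + (t * k) * hCC' - (t * k) * hAB' -
      t ^ 2 * k ^ 2 * hBC'
  have hNt : -((c 0 - t * k * b 0) * b 0) + (c 1 - t * k * b 1) * b 1 +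
      (c 2 - t * k * b 2) * b 2 = 0 := by
    linear_combination hBC' - (t * k) * hBB'
  have hfv : -(k * c 0 * (c 0 - t * k * b 0)) + k * c 1 * (c 1 - t * k * b 1) +
      k * c 2 * (c 2 - t * k * b 2) = k := by
    linear_combination k * hCC' - (t * k ^ 2) * hBC'
  refine ⟨hE, hF, hG, ?_, hNN, hNs, hNt, hfv, by ring, ?_, ?_⟩
  · rw [hE, hF, hG]; ring
  · rw [hE, hF, hG, hfv]; ring_nf
  · rw [hE, hF, hG, hfv]; ring_nf
end
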